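/- For every a ∈ Z one has SA_{a,1/2} ≅ SA_{1/2,1/2} as Neveu–Schwarz modules. Moreover, in SA_{1/2,1/2} the vector y_{−1/2} is annihilated by all the operators L_i and G_{i+1/2} (i ∈ ℤ), so the line ℂ·y_{−1/2} is a submodule of SA_{1/2,1/2}, and the quotient module SA'_{1/2,1/2} = SA_{1/2,1/2}/ℂ·y_{−1/2} is simple. -/

import Mathlib

noncomputable section

open Submodule

/-- The underlying data of a `ℤ/2`-graded complex vector space equipped with
operators `L m` (`m ∈ ℤ`) and `G k` (`k ∈ ℤ`, where `G k` represents the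
operator `G_{k+1/2}` indexed by the half-integer `k + 1/2`). -/
structure PreNSMod where
  carrier : Type
  [acg : AddCommGroup carrier]
  [mod : Module ℂ carrier]
  even : Submodule ℂ carrier
  odd : Submodule ℂ carrier
  compl : IsCompl even odd
  L : ℤ → carrier →ₗ[ℂ] carrier
  G : ℤ → carrier →ₗ[ℂ] carrier

attribute [instance] PreNSMod.acg PreNSMod.mod

/-- A Neveu–Schwarz module of central charge `c`. -/
structure NSMod (c : ℂ) extends PreNSMod where
  mapsL_even : ∀ (m : ℤ), ∀ v ∈ even, L m v ∈ even
  mapsL_odd : ∀ (m : ℤ), ∀ v ∈ odd, L m v ∈ odd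
  mapsG_even : ∀ (k : ℤ), ∀ v ∈ even, G k v ∈ odd
  mapsG_odd : ∀ (k : ℤ), ∀ v ∈ odd, G k v ∈ even
  rel_LL : ∀ (m n : ℤ) (v : carrier),
    L m (L n v) - L n (L m v)
      = ((n : ℂ) - (m : ℂ)) • L (m + n) v
        + (if m + n = 0 then (((m : ℂ) ^ 3 - (m : ℂ)) / 12) * c else 0) • v
  rel_LG : ∀ (m k : ℤ) (v : carrier),
    L m (G k v) - G k (L m v) = (((k : ℂ) + 1 / 2) - (m : ℂ) / 2) • G (m + k) v
  rel_GG : ∀ (k l : ℤ) (v : carrier),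
    G k (G l v) + G l (G k v)
      = (2 : ℂ) • L (k + l + 1) v
        - (if k + l + 1 = 0 then (1 / 3) * (((k : ℂ) + 1 / 2) ^ 2 - 1 / 4) * c else 0) • v

/-- A submodule (invariant subspace) of a Neveu–Schwarz module. -/
def NSMod.IsSubmodule {c : ℂ} (S : NSMod c) (W : Submodule ℂ S.carrier) : Prop :=
  (∀ (m : ℤ), ∀ v ∈ W, S.L m v ∈ W) ∧ (∀ (k : ℤ), ∀ v ∈ W, S.G k v ∈ W)

/-- Simplicity (irreducibility) of a Neveu–Schwarz module. -/
def NSMod.IsSimple {c : ℂ} (S : NSMod c) : Prop :=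
  (∃ v : S.carrier, v ≠ 0) ∧
    ∀ W : Submodule ℂ S.carrier, S.IsSubmodule W → W = ⊥ ∨ W = ⊤

/-- `W` is a nonzero submodule which is simple as a module (it has no invariant
subspaces other than `⊥` and itself). -/
def NSMod.IsSimpleSubmodule {c : ℂ} (S : NSMod c) (W : Submodule ℂ S.carrier) : Prop :=
  S.IsSubmodule W ∧ W ≠ ⊥ ∧
    ∀ W' : Submodule ℂ S.carrier, S.IsSubmodule W' → W' ≤ W → W' = ⊥ ∨ W' = W

/-- A homomorphism of Neveu–Schwarz modules: a linear map commuting with all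
the operators `L m` and `G k`. -/
structure NSHom {c c' : ℂ} (S : NSMod c) (T : NSMod c') where
  toFun : S.carrier →ₗ[ℂ] T.carrier
  commL : ∀ (m : ℤ) (v : S.carrier), toFun (S.L m v) = T.L m (toFun v)
  commG : ∀ (k : ℤ) (v : S.carrier), toFun (S.G k v) = T.G k (toFun v)

/-- Two Neveu–Schwarz modules are isomorphic if there is a bijective
homomorphism between them. -/
def NSIso {c c' : ℂ} (S : NSMod c) (T : NSMod c') : Prop :=
  ∃ f : NSHom S T, Function.Bijective f.toFun

/-- A realization of the intermediate series module `SA_{a,b}` inside a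
Neveu–Schwarz module `S` of central charge `0`: a basis `x j` (`j ∈ ℤ`, even)
and `y j` (`j ∈ ℤ`, representing `y_{j+1/2}`, odd) on which the operators act
by the defining formulas of `SA_{a,b}`. -/
structure SAFamily (a b : ℂ) (S : NSMod 0) where
  x : ℤ → S.carrier
  y : ℤ → S.carrier
  x_even : ∀ j : ℤ, x j ∈ S.even
  y_odd : ∀ j : ℤ, y j ∈ S.odd
  indep : LinearIndependent ℂ (Sum.elim x y)
  spans : Submodule.span ℂ (Set.range x ∪ Set.range y) = ⊤
  act_Lx : ∀ i j : ℤ, S.L i (x j) = (a + (j : ℂ) + (i : ℂ) * b) • x (i + j)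
  act_Ly : ∀ i j : ℤ,
    S.L i (y j) = (a + 1 / 2 + (j : ℂ) + (i : ℂ) * (b - 1 / 2)) • y (i + j)
  act_Gx : ∀ i j : ℤ, S.G i (x j) = y (i + j)
  act_Gy : ∀ i j : ℤ,
    S.G i (y j) = (a + 1 / 2 + (j : ℂ) + (2 * (i : ℂ) + 1) * (b - 1 / 2)) • x (i + j + 1)

/-- A realization of the intermediate series module `SA'_{a,b}` (for
`0 ≤ Re a < 1`, `b ≠ 1`) inside a Neveu–Schwarz module `S` of central
charge `0`.  For `(a,b) ≠ (1/2,1/2)` this is `SA_{a,b}` itself; for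
`(a,b) = (1/2,1/2)` it is the quotient `SA_{1/2,1/2}/ℂ·y_{-1/2}`, in which
the image of `y_{-1/2}` (here `y (-1)`) is zero and the remaining vectors
form a basis.  The action formulas hold verbatim in both cases. -/
structure SA'Family (a b : ℂ) (S : NSMod 0) where
  x : ℤ → S.carrier
  y : ℤ → S.carrier
  x_even : ∀ j : ℤ, x j ∈ S.even
  y_odd : ∀ j : ℤ, y j ∈ S.odd
  spans : Submodule.span ℂ (Set.range x ∪ Set.range y) = ⊤
  indep_special : a = 1 / 2 ∧ b = 1 / 2 →
    y (-1) = 0 ∧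
      LinearIndependent ℂ (Sum.elim x (fun j : {j : ℤ // j ≠ -1} => y j.1))
  indep_generic : ¬(a = 1 / 2 ∧ b = 1 / 2) → LinearIndependent ℂ (Sum.elim x y)
  act_Lx : ∀ i j : ℤ, S.L i (x j) = (a + (j : ℂ) + (i : ℂ) * b) • x (i + j)
  act_Ly : ∀ i j : ℤ,
    S.L i (y j) = (a + 1 / 2 + (j : ℂ) + (i : ℂ) * (b - 1 / 2)) • y (i + j)
  act_Gx : ∀ i j : ℤ, S.G i (x j) = y (i + j)
  act_Gy : ∀ i j : ℤ,
    S.G i (y j) = (a + 1 / 2 + (j : ℂ) + (2 * (i : ℂ) + 1) * (b - 1 / 2)) • x (i + j + 1)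

/-- `u` is a highest weight vector of weight `(c,h)` generating the
Neveu–Schwarz module `S` (of central charge `c`). -/
structure IsHW {c : ℂ} (h : ℂ) (S : NSMod c) (u : S.carrier) : Prop where
  ne_zero : u ≠ 0
  mem_even : u ∈ S.even
  hw0 : S.L 0 u = h • u
  hwL : ∀ n : ℤ, 1 ≤ n → S.L n u = 0
  hwG : ∀ k : ℤ, 0 ≤ k → S.G k u = 0
  gen : ∀ W : Submodule ℂ S.carrier, S.IsSubmodule W → u ∈ W → W = ⊤

/-- A realization of the tensor product Neveu–Schwarz module `V ⊗ S` (with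
`V` of central charge `c` and `S` of central charge `0`) as a Neveu–Schwarz
module `T` of central charge `c`, via the bilinear map `t`. -/
structure TensorWitness {c : ℂ} (V : NSMod c) (S : NSMod 0) (T : NSMod c) where
  t : V.carrier →ₗ[ℂ] S.carrier →ₗ[ℂ] T.carrier
  isTensor : IsTensorProduct t
  grade_ee : ∀ v ∈ V.even, ∀ w ∈ S.even, t v w ∈ T.even
  grade_oo : ∀ v ∈ V.odd, ∀ w ∈ S.odd, t v w ∈ T.even
  grade_eo : ∀ v ∈ V.even, ∀ w ∈ S.odd, t v w ∈ T.odd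
  grade_oe : ∀ v ∈ V.odd, ∀ w ∈ S.even, t v w ∈ T.odd
  actL : ∀ (m : ℤ) (v : V.carrier) (w : S.carrier),
    T.L m (t v w) = t (V.L m v) w + t v (S.L m w)
  actG_even : ∀ (k : ℤ), ∀ v ∈ V.even, ∀ w : S.carrier,
    T.G k (t v w) = t (V.G k v) w + t v (S.G k w)
  actG_odd : ∀ (k : ℤ), ∀ v ∈ V.odd, ∀ w : S.carrier,
    T.G k (t v w) = t (V.G k v) w - t v (S.G k w)

/-- The PBW monomial `L_{-n₁} ⋯ L_{-n_p} G_{-r₁} ⋯ G_{-r_q} u`, where the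
second list records each half-integer `r = k - 1/2` by the integer `k`
(so that `G_{-r}` is the operator `G (-k)`). -/
def vermaMonomial {c : ℂ} (M : NSMod c) (u : M.carrier) (p : List ℤ × List ℤ) :
    M.carrier :=
  (p.1.map fun n => M.L (-n)).foldr (fun f v => f v)
    ((p.2.map fun k => M.G (-k)).foldr (fun f v => f v) u)

/-- The index set for the PBW basis of a Verma module: weakly decreasing lists
of positive integers `n₁ ≥ ⋯ ≥ n_p ≥ 1`, together with strictly decreasing
lists of positive half-integers `r₁ > ⋯ > r_q > 0` (with `r = k - 1/2`
recorded by the integer `k ≥ 1`). -/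
def VermaIndex : Type :=
  {p : List ℤ × List ℤ //
    p.1.Chain' (· ≥ ·) ∧ (∀ n ∈ p.1, 1 ≤ n) ∧
      p.2.Chain' (· > ·) ∧ (∀ k ∈ p.2, 1 ≤ k)}

/-- `M` is the Verma module of highest weight `(c,h)` with highest weight
vector `u`: the PBW monomials in the negative-mode operators applied to `u`
form a basis of `M`. -/
def IsVerma {c : ℂ} (h : ℂ) (M : NSMod c) (u : M.carrier) : Prop :=
  IsHW h M u ∧
    LinearIndependent ℂ (fun p : VermaIndex => vermaMonomial M u p.1) ∧
    Submodule.span ℂ (Set.range fun p : VermaIndex => vermaMonomial M u p.1) = ⊤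

/-- The grading assumption on a highest weight module `V` of highest weight
`(c,h)`: `V = ⨁_{n ∈ ℕ} V_{h-n/2}` where `D n = V_{h-n/2}` is the
`L₀`-eigenspace with eigenvalue `h - n/2`, contained in the even part for
`n` even and the odd part for `n` odd, and `u ∈ D 0`. -/
structure GradedHW {c : ℂ} (h : ℂ) (V : NSMod c) (u : V.carrier)
    (D : ℕ → Submodule ℂ V.carrier) : Prop where
  hw : IsHW h V u
  u_mem : u ∈ D 0
  internal : DirectSum.IsInternal D
  eig : ∀ (n : ℕ), ∀ v ∈ D n, V.L 0 v = (h - (n : ℂ) / 2) • v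
  even_part : ∀ n : ℕ, Even n → D n ≤ V.even
  odd_part : ∀ n : ℕ, Odd n → D n ≤ V.odd

/-- A realization of the shifted module `V ⊗ ℂ[t^{±1/2}]` on the graded
vector space `Sh`.  Here `ι p v` represents `v ⊗ t^{p/2}` (half-integers
`s ∈ (1/2)ℤ` are recorded by integers `p` with `s = p/2`), and `D n` is the
weight space `V_{h - n/2}` (so `d = -n/2`).  The case distinction
`s + d ∈ ℤ` versus `s + d ∈ ℤ + 1/2` becomes `2 ∣ (p - n)` versus its
negation. -/
structure ShiftedWitness (a b : ℂ) {c : ℂ} (V : NSMod c)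
    (D : ℕ → Submodule ℂ V.carrier) (Sh : PreNSMod) where
  ι : ℤ → V.carrier →ₗ[ℂ] Sh.carrier
  directSum : Function.Bijective
    (Finsupp.lsum ℂ ι : (ℤ →₀ V.carrier) →ₗ[ℂ] Sh.carrier)
  grade_even : ∀ p : ℤ, (2 : ℤ) ∣ p → ∀ v : V.carrier, ι p v ∈ Sh.even
  grade_odd : ∀ p : ℤ, ¬(2 : ℤ) ∣ p → ∀ v : V.carrier, ι p v ∈ Sh.odd
  actL : ∀ (k p : ℤ) (n : ℕ), ∀ v ∈ D n,
    Sh.L k (ι p v) = ι (p + 2 * k) (V.L k v)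
      + (if (2 : ℤ) ∣ (p - (n : ℤ))
          then a + (p : ℂ) / 2 + (k : ℂ) * b + (n : ℂ) / 2
          else a + (p : ℂ) / 2 + (k : ℂ) * (b - 1 / 2) + (n : ℂ) / 2) •
            ι (p + 2 * k) v
  actG : ∀ (k p : ℤ) (n : ℕ), ∀ v ∈ D n,
    Sh.G k (ι p v) = ι (p + 2 * k + 1) (V.G k v)
      + ((-1 : ℂ) ^ n *
          (if (2 : ℤ) ∣ (p - (n : ℤ)) then 1
            else a + (p : ℂ) / 2 + (2 * (k : ℂ) + 1) * (b - 1 / 2) + (n : ℂ) / 2)) •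
            ι (p + 2 * k + 1) v

/-- A realization of the *reduced* shifted module: the quotient of the
shifted module `V ⊗ ℂ[t^{±1/2}]` by the copy of `V` spanned by the vectors
`v ⊗ t^{d - 1/2}` (`v ∈ V_{h+d}`) when `(a,b) = (1/2,1/2)`, and the shifted
module itself otherwise. -/
structure RedShiftedWitness (a b : ℂ) {c : ℂ} (V : NSMod c)
    (D : ℕ → Submodule ℂ V.carrier) (R : NSMod c) where
  ι : ℤ → V.carrier →ₗ[ℂ] R.carrier
  surj : Function.Surjective
    (Finsupp.lsum ℂ ι : (ℤ →₀ V.carrier) →ₗ[ℂ] R.carrier)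
  ker_special : a = 1 / 2 ∧ b = 1 / 2 →
    LinearMap.ker (Finsupp.lsum ℂ ι : (ℤ →₀ V.carrier) →ₗ[ℂ] R.carrier)
      = Submodule.span ℂ
          {w : ℤ →₀ V.carrier | ∃ n : ℕ, ∃ v ∈ D n, w = Finsupp.single (-(n : ℤ) - 1) v}
  ker_generic : ¬(a = 1 / 2 ∧ b = 1 / 2) →
    LinearMap.ker (Finsupp.lsum ℂ ι : (ℤ →₀ V.carrier) →ₗ[ℂ] R.carrier) = ⊥
  grade_even : ∀ p : ℤ, (2 : ℤ) ∣ p → ∀ v : V.carrier, ι p v ∈ R.even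
  grade_odd : ∀ p : ℤ, ¬(2 : ℤ) ∣ p → ∀ v : V.carrier, ι p v ∈ R.odd
  actL : ∀ (k p : ℤ) (n : ℕ), ∀ v ∈ D n,
    R.L k (ι p v) = ι (p + 2 * k) (V.L k v)
      + (if (2 : ℤ) ∣ (p - (n : ℤ))
          then a + (p : ℂ) / 2 + (k : ℂ) * b + (n : ℂ) / 2
          else a + (p : ℂ) / 2 + (k : ℂ) * (b - 1 / 2) + (n : ℂ) / 2) •
            ι (p + 2 * k) v
  actG : ∀ (k p : ℤ) (n : ℕ), ∀ v ∈ D n,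
    R.G k (ι p v) = ι (p + 2 * k + 1) (V.G k v)
      + ((-1 : ℂ) ^ n *
          (if (2 : ℤ) ∣ (p - (n : ℤ)) then 1
            else a + (p : ℂ) / 2 + (2 * (k : ℂ) + 1) * (b - 1 / 2) + (n : ℂ) / 2)) •
            ι (p + 2 * k + 1) v

/-- `φ` is a shifted character at level `s = p/2` on the Verma module `M`
with grading `D` and highest weight vector `u`:  `φ u = 1` and `φ` satisfies
the defining recursions on homogeneous vectors (`w ∈ D n` means
`L₀ w = (h + d) w` with `d = -n/2` and `w` of parity `n mod 2`; the operator
`G (-j)` is `G_{-r}` with `r = j - 1/2 > 0`). -/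
def IsShiftedChar (a b : ℂ) {c : ℂ} (M : NSMod c)
    (D : ℕ → Submodule ℂ M.carrier) (u : M.carrier) (p : ℤ)
    (φ : M.carrier →ₗ[ℂ] ℂ) : Prop :=
  φ u = 1 ∧
    (∀ (n : ℕ), ∀ w ∈ D n, ∀ k : ℤ, 1 ≤ k →
      φ (M.L (-k) w)
        = (if (2 : ℤ) ∣ (p - (n : ℤ))
            then -(a + (p : ℂ) / 2 + (k : ℂ) - (k : ℂ) * b + (n : ℂ) / 2)
            else -(a + (p : ℂ) / 2 + (k : ℂ) - (k : ℂ) * (b - 1 / 2) + (n : ℂ) / 2))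
          * φ w) ∧
    (∀ (n : ℕ), ∀ w ∈ D n, ∀ j : ℤ, 1 ≤ j →
      φ (M.G (-j) w)
        = (if (2 : ℤ) ∣ (p - (n : ℤ))
            then -(-1 : ℂ) ^ n *
              (a + (p : ℂ) / 2 + ((j : ℂ) - 1 / 2)
                - 2 * ((j : ℂ) - 1 / 2) * (b - 1 / 2) + (n : ℂ) / 2)
            else -(-1 : ℂ) ^ n)
          * φ w)

/-! The index shift `x_j ↦ x_{j+m}`, `y_{j+1/2} ↦ y_{j+m+1/2}` intertwines the actions on
`SA_{m+a,b}` and `SA_{a,b}`. For the simplicity of the quotient: `L_0` is diagonal on the basis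
with pairwise distinct eigenvalues (`a + j` on `x_j`, `a + 1/2 + j` on `y_{j+1/2}`), so a submodule
contains every basis vector occurring in any of its elements. A submodule not inside
`ℂ·y_{-1/2}` therefore contains some `x_j`, or some `y_{j+1/2}` with `j ≠ -1`; since
`G_r x_j = y_{j+r}` and, for `b = 1/2`, `G_r y_{j+1/2} = (a + 1/2 + j) x_{j+r+1/2}`, it then
contains the whole basis. -/

theorem Submodule.smul_mem_of_sum_smul_mem_of_eigenvectors {K M ι : Type*} [Field K]
    [AddCommGroup M] [Module K M] {T : Module.End K M} {W : Submodule K M}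
    (hW : ∀ v ∈ W, T v ∈ W) {e : ι → M} {μ : ι → K} (hμ : Function.Injective μ)
    (he : ∀ i, T (e i) = μ i • e i) (s : Finset ι) (c : ι → K)
    (hs : ∑ i ∈ s, c i • e i ∈ W) : ∀ i ∈ s, c i • e i ∈ W := by
  classical
  induction s using Finset.induction_on generalizing c with
  | empty => simp
  | @insert a s ha ih =>
    set v := ∑ i ∈ insert a s, c i • e i
    -- `T - μ a` kills the `a`-component and rescales the others by nonzero factors.
    have hterm (i : ι) : T (c i • e i) - μ a • c i • e i = ((μ i - μ a) * c i) • e i := by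
      rw [map_smul, he, smul_smul, smul_smul, ← sub_smul]
      congr 1; ring
    have hshift : T v - μ a • v = ∑ i ∈ s, ((μ i - μ a) * c i) • e i := by
      rw [map_sum, Finset.smul_sum, ← Finset.sum_sub_distrib,
        Finset.sum_congr rfl fun i _ => hterm i, Finset.sum_insert ha, sub_self, zero_mul,
        zero_smul, zero_add]
    have hmem : ∀ i ∈ s, c i • e i ∈ W := by
      intro i hi
      have hne : μ i - μ a ≠ 0 := sub_ne_zero.mpr (hμ.ne fun h => ha (h ▸ hi))
      have h := ih _ (hshift ▸ W.sub_mem (hW v hs) (W.smul_mem _ hs)) i hi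
      rwa [← smul_smul, W.smul_mem_iff hne] at h
    intro i hi
    rcases Finset.mem_insert.mp hi with rfl | hi
    · have hv : c i • e i = v - ∑ j ∈ s, c j • e j := by
        simp only [v, Finset.sum_insert ha, add_sub_cancel_right]
      exact hv ▸ W.sub_mem hs (W.sum_mem hmem)
    · exact hmem i hi

theorem Module.Basis.mem_of_repr_ne_zero_of_eigenvectors {K M ι : Type*} [Field K]
    [AddCommGroup M] [Module K M] (B : Module.Basis ι K M) {T : Module.End K M}
    {W : Submodule K M} (hW : ∀ v ∈ W, T v ∈ W) {μ : ι → K} (hμ : Function.Injective μ)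
    (hB : ∀ i, T (B i) = μ i • B i) {v : M} (hv : v ∈ W) {i : ι} (hi : B.repr v i ≠ 0) :
    B i ∈ W := by
  have hsum : ∑ j ∈ (B.repr v).support, B.repr v j • B j ∈ W := by
    change (B.repr v).sum (fun j t => t • B j) ∈ W
    rwa [← Finsupp.linearCombination_apply, B.linearCombination_repr]
  have h := Submodule.smul_mem_of_sum_smul_mem_of_eigenvectors hW hμ hB _ _ hsum i
    (Finsupp.mem_support_iff.mpr hi)
  rwa [W.smul_mem_iff hi] at h

theorem NSMod.isSubmodule_span_singleton {c : ℂ} (S : NSMod c) {v : S.carrier}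
    (hL : ∀ i, S.L i v = 0) (hG : ∀ i, S.G i v = 0) :
    S.IsSubmodule (Submodule.span ℂ {v}) := by
  constructor <;> intro i w hw <;> obtain ⟨t, rfl⟩ := Submodule.mem_span_singleton.mp hw <;>
    simp [hL, hG]

namespace SAFamily

def weight (a : ℂ) : ℤ ⊕ ℤ → ℂ :=
  Sum.elim (fun j => a + j) (fun j => a + 1 / 2 + j)

theorem weight_injective (a : ℂ) : Function.Injective (weight a) := by
  have hhalf (j k : ℤ) : a + j ≠ a + 1 / 2 + k := by
    intro h
    have h2 : ((2 * (j - k) : ℤ) : ℂ) = ((1 : ℤ) : ℂ) := by push_cast; linear_combination 2 * h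
    have h3 : 2 * (j - k) = 1 := by exact_mod_cast h2
    omega
  rintro (j | j) (k | k) h <;> simp only [weight, Sum.elim_inl, Sum.elim_inr] at h
  · simpa using h
  · exact absurd h (hhalf j k)
  · exact absurd h.symm (hhalf k j)
  · simpa using h

section

variable {a b : ℂ} {S : NSMod 0} (F : SAFamily a b S)

def basis : Module.Basis (ℤ ⊕ ℤ) ℂ S.carrier :=
  Module.Basis.mk F.indep (by rw [Set.Sum.elim_range, F.spans])

@[simp]
theorem basis_inl (j : ℤ) : F.basis (Sum.inl j) = F.x j := by
  simp [basis]

@[simp]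
theorem basis_inr (j : ℤ) : F.basis (Sum.inr j) = F.y j := by
  simp [basis]

theorem span_y_ne_top (j : ℤ) : Submodule.span ℂ {F.y j} ≠ ⊤ := by
  intro htop
  have hx := F.indep.notMem_span_image (s := {Sum.inr j}) (x := Sum.inl 0) (by simp)
  rw [Set.image_singleton, Sum.elim_inr, htop] at hx
  exact hx trivial

theorem L_zero_basis (i : ℤ ⊕ ℤ) : S.L 0 (F.basis i) = weight a i • F.basis i := by
  rcases i with j | j
  · simp [weight, F.act_Lx]
  · simp [weight, F.act_Ly]

theorem basis_mem_of_repr_ne_zero {W : Submodule ℂ S.carrier} (hW : S.IsSubmodule W)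
    {v : S.carrier} (hv : v ∈ W) {i : ℤ ⊕ ℤ} (hi : F.basis.repr v i ≠ 0) : F.basis i ∈ W :=
  F.basis.mem_of_repr_ne_zero_of_eigenvectors (hW.1 0) (weight_injective a) F.L_zero_basis hv hi

theorem y_mem_of_x_mem {W : Submodule ℂ S.carrier} (hW : S.IsSubmodule W) {j : ℤ}
    (hx : F.x j ∈ W) (k : ℤ) : F.y k ∈ W := by
  simpa [F.act_Gx] using hW.2 (k - j) _ hx

theorem eq_top_of_forall_mem {W : Submodule ℂ S.carrier} (hx : ∀ k, F.x k ∈ W)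
    (hy : ∀ k, F.y k ∈ W) : W = ⊤ := by
  rw [eq_top_iff, ← F.spans, Submodule.span_le]
  rintro v (⟨k, rfl⟩ | ⟨k, rfl⟩)
  exacts [hx k, hy k]

end

theorem nsIso_of_eq_int_add {a a' b : ℂ} {S T : NSMod 0} (F : SAFamily a b S)
    (F' : SAFamily a' b T) (m : ℤ) (h : a = m + a') : NSIso S T := by
  let e : ℤ ⊕ ℤ ≃ ℤ ⊕ ℤ := Equiv.sumCongr (Equiv.addRight m) (Equiv.addRight m)
  let f := Module.Basis.equiv F.basis F'.basis e
  have hfx (j : ℤ) : f (F.x j) = F'.x (j + m) := by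
    simpa [e] using F.basis.equiv_apply (Sum.inl j) F'.basis e
  have hfy (j : ℤ) : f (F.y j) = F'.y (j + m) := by
    simpa [e] using F.basis.equiv_apply (Sum.inr j) F'.basis e
  refine ⟨⟨f.toLinearMap, fun i v => ?_, fun i v => ?_⟩, f.bijective⟩
  · refine LinearMap.congr_fun (F.basis.ext (f₁ := f.toLinearMap ∘ₗ S.L i)
      (f₂ := T.L i ∘ₗ f.toLinearMap) ?_) v
    rintro (j | j)
    · simp only [LinearMap.comp_apply, LinearEquiv.coe_coe, basis_inl, F.act_Lx, map_smul,
        hfx, F'.act_Lx, h, add_assoc]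
      congr 1; push_cast; ring
    · simp only [LinearMap.comp_apply, LinearEquiv.coe_coe, basis_inr, F.act_Ly, map_smul,
        hfy, F'.act_Ly, h, add_assoc]
      congr 1; push_cast; ring
  · refine LinearMap.congr_fun (F.basis.ext (f₁ := f.toLinearMap ∘ₗ S.G i)
      (f₂ := T.G i ∘ₗ f.toLinearMap) ?_) v
    rintro (j | j)
    · simp only [LinearMap.comp_apply, LinearEquiv.coe_coe, basis_inl, F.act_Gx, hfx, hfy,
        F'.act_Gx, add_assoc]
    · simp only [LinearMap.comp_apply, LinearEquiv.coe_coe, basis_inr, F.act_Gy, map_smul,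
        hfx, hfy, F'.act_Gy, h, add_right_comm _ (1 : ℤ), add_assoc]
      congr 1; push_cast; ring

section

variable {a : ℂ} {S : NSMod 0} (F : SAFamily a (1 / 2) S)

theorem x_mem_of_y_mem {W : Submodule ℂ S.carrier} (hW : S.IsSubmodule W) {j : ℤ}
    (hj : a + 1 / 2 + j ≠ 0) (hy : F.y j ∈ W) (k : ℤ) : F.x k ∈ W := by
  have h := hW.2 (k - j - 1) _ hy
  rw [F.act_Gy, show k - j - 1 + j + 1 = k by ring, sub_self, mul_zero, add_zero,
    W.smul_mem_iff hj] at h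
  exact h

theorem eq_top_of_y_mem {W : Submodule ℂ S.carrier} (hW : S.IsSubmodule W) {j : ℤ}
    (hj : a + 1 / 2 + j ≠ 0) (hy : F.y j ∈ W) : W = ⊤  := by
  have hx := F.x_mem_of_y_mem hW hj hy
  exact F.eq_top_of_forall_mem hx (F.y_mem_of_x_mem hW (hx 0))

theorem eq_top_of_x_mem {W : Submodule ℂ S.carrier} (hW : S.IsSubmodule W) {j : ℤ}
    (hx : F.x j ∈ W) : W = ⊤ := by
  by_cases h : a + 1 / 2 = 0
  · refine F.eq_top_of_y_mem hW (j := 1) ?_ (F.y_mem_of_x_mem hW hx 1)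
    rw [Int.cast_one, h]; norm_num
  · exact F.eq_top_of_y_mem hW (by simpa using h) (F.y_mem_of_x_mem hW hx 0)

end

section

variable {S : NSMod 0} (F : SAFamily (1 / 2) (1 / 2) S)

theorem L_y_neg_one (i : ℤ) : S.L i (F.y (-1)) = 0 := by
  rw [F.act_Ly]; norm_num

theorem G_y_neg_one (i : ℤ) : S.G i (F.y (-1)) = 0 := by
  rw [F.act_Gy]; norm_num

theorem eq_top_of_not_le_span_y {W : Submodule ℂ S.carrier} (hW : S.IsSubmodule W)
    (hle : ¬W ≤ Submodule.span ℂ {F.y (-1)}) : W = ⊤ := by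
  obtain ⟨v, hvW, hv⟩ := SetLike.not_le_iff_exists.mp hle
  rw [← F.basis_inr, ← Set.image_singleton, F.basis.mem_span_image,
    Set.not_subset] at hv
  obtain ⟨i, hi, hne⟩ := hv
  have hB := F.basis_mem_of_repr_ne_zero hW hvW (Finsupp.mem_support_iff.mp hi)
  rcases i with j | j
  · exact F.eq_top_of_x_mem hW (by simpa using hB)
  · refine F.eq_top_of_y_mem hW ?_ (by simpa using hB)
    have hj : j ≠ -1 := fun h => hne (by simp [h])
    intro h0
    have h1 : (j : ℂ) = ((-1 : ℤ) : ℂ) := by push_cast; linear_combination h0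
    exact hj (by exact_mod_cast h1)

end

end SAFamily

/-- Theorem 0.1(2), second part: for `a ∈ ℤ + 1/2` one has
`SA_{a,1/2} ≅ SA_{1/2,1/2}`; moreover in `SA_{1/2,1/2}` the vector `y_{-1/2}`
(here `y (-1)`) is annihilated by all `L_i` and `G_{i+1/2}`, the line
`ℂ·y_{-1/2}` is a submodule, and the quotient `SA_{1/2,1/2}/ℂ·y_{-1/2}` is
simple (equivalently, the line is proper and every submodule containing it is
the line or everything). -/
theorem SA_halfint_iso_and_simple_quotient (m : ℤ)
    (S : NSMod 0) (F : SAFamily ((m : ℂ) + 1 / 2) (1 / 2) S)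
    (S₀ : NSMod 0) (F₀ : SAFamily (1 / 2) (1 / 2) S₀) :
    NSIso S S₀ ∧
      (∀ i : ℤ, S₀.L i (F₀.y (-1)) = 0 ∧ S₀.G i (F₀.y (-1)) = 0) ∧
      S₀.IsSubmodule (Submodule.span ℂ {F₀.y (-1)}) ∧
      Submodule.span ℂ {F₀.y (-1)} ≠ ⊤ ∧
      (∀ W : Submodule ℂ S₀.carrier, S₀.IsSubmodule W →
        Submodule.span ℂ {F₀.y (-1)} ≤ W →
          W = Submodule.span ℂ {F₀.y (-1)} ∨ W = ⊤) := by
  refine ⟨F.nsIso_of_eq_int_add F₀ m rfl, fun i => ⟨F₀.L_y_neg_one i, F₀.G_y_neg_one i⟩,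
    S₀.isSubmodule_span_singleton F₀.L_y_neg_one F₀.G_y_neg_one, F₀.span_y_ne_top (-1),
    fun W hW hle => ?_⟩
  by_cases h : W ≤ Submodule.span ℂ {F₀.y (-1)}
  · exact .inl (le_antisymm h hle)
  · exact .inr (F₀.eq_top_of_not_le_span_y hW h)
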